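/- arXiv:2401.05611 — 8 statements merged into one kernel-verified Lean document; each statement's English description precedes it below -/
import Mathlib

section
/- Let G be the root gadget and let C be the class of rooted pseudo networks that are tree-child. Then G has a C_A-orientation whose root ρ subdivides the edge {w,x}. -/
/-!
Common definitions: rooted (pseudo/phylogenetic) networks represented as arc
relations `D : V → V → Prop` on a vertex type `V`, with in/out-degrees measured
by `Set.ncard`, together with the orientation notions (Variant A, Variant B,
orientations of connector networks) from the paper.
-/

section Prelude

universe u
variable {V : Type u}

/-- In-degree of `v` in the digraph with arc relation `D`. -/
noncomputable def inDeg (D : V → V → Prop) (v : V) : ℕ := Set.ncard {u | D u v}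

/-- Out-degree of `v` in the digraph with arc relation `D`. -/
noncomputable def outDeg (D : V → V → Prop) (v : V) : ℕ := Set.ncard {u | D v u}

/-- A digraph is acyclic if it has no directed cycle. -/
def Acyclic (D : V → V → Prop) : Prop := ∀ v, ¬ Relation.TransGen D v v

/-- A tree vertex: in-degree 1 and out-degree at least 1. -/
def IsTreeVertex (D : V → V → Prop) (v : V) : Prop := inDeg D v = 1 ∧ 1 ≤ outDeg D v

/-- A leaf (sink) of a digraph. -/
def IsLeafVertex (D : V → V → Prop) (v : V) : Prop := outDeg D v = 0

/-- Tree-child: every non-leaf vertex has a child that is a tree vertex or a leaf. -/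
def TreeChild (D : V → V → Prop) : Prop :=
  ∀ v, ¬ IsLeafVertex D v → ∃ u, D v u ∧ (IsTreeVertex D u ∨ IsLeafVertex D u)

/-- Funneled: every reticulation (in-degree at least 2) has out-degree 1. -/
def Funneled (D : V → V → Prop) : Prop := ∀ v, 2 ≤ inDeg D v → outDeg D v = 1

/-- An arc `(a,b)` is a shortcut if there is another directed path from `a` to `b`. -/
def IsShortcut (D : V → V → Prop) (a b : V) : Prop :=
  D a b ∧ ∃ c, D a c ∧ Relation.TransGen D c b

/-- Normal: tree-child and without shortcuts. -/
def NormalNet (D : V → V → Prop) : Prop := TreeChild D ∧ ∀ a b, ¬ IsShortcut D a b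

/-- `D` is a rooted pseudo network with root `ρ` whose set of leaves is `X`
(leaves are labelled by themselves). -/
def IsRootedPseudoNetwork (D : V → V → Prop) (ρ : V) (X : Set V) : Prop :=
  Acyclic D ∧ (∀ v, ¬ D v v) ∧
  inDeg D ρ = 0 ∧ 1 ≤ outDeg D ρ ∧
  (∀ v, inDeg D v = 0 → v = ρ) ∧
  (∀ v, outDeg D v = 0 → inDeg D v = 1) ∧
  {v | outDeg D v = 0} = X ∧
  (∀ v, v ≠ ρ → outDeg D v ≠ 0 → 1 ≤ inDeg D v ∧ 1 ≤ outDeg D v)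

/-- `D` is a rooted phylogenetic network with root `ρ` and leaf set `X`:
additionally every internal vertex has in-degree 1 and out-degree ≥ 2, or
in-degree ≥ 2 and out-degree ≥ 1. -/
def IsRootedPhyloNetwork (D : V → V → Prop) (ρ : V) (X : Set V) : Prop :=
  Acyclic D ∧ (∀ v, ¬ D v v) ∧
  inDeg D ρ = 0 ∧ 1 ≤ outDeg D ρ ∧
  (∀ v, inDeg D v = 0 → v = ρ) ∧
  (∀ v, outDeg D v = 0 → inDeg D v = 1) ∧
  {v | outDeg D v = 0} = X ∧
  (∀ v, v ≠ ρ → outDeg D v ≠ 0 →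
    (inDeg D v = 1 ∧ 2 ≤ outDeg D v) ∨ (2 ≤ inDeg D v ∧ 1 ≤ outDeg D v))

/-- `{u,w} = {a,b}` as unordered pairs. -/
def SamePair (u w a b : V) : Prop := (u = a ∧ w = b) ∨ (u = b ∧ w = a)

/-- A Variant-A orientation of the undirected graph `adj` obtained by
subdividing the edge `{a,b}` with a new root vertex `none` and directing all
edges; `D` is the resulting arc relation on `Option V` (the root is `none`). -/
def VariantA (adj : V → V → Prop) (a b : V) (D : Option V → Option V → Prop) : Prop :=
  adj a b ∧
  D none (some a) ∧ D none (some b) ∧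
  (∀ o, ¬ D o none) ∧
  (∀ u, D none (some u) → u = a ∨ u = b) ∧
  (∀ u w : V, D (some u) (some w) → adj u w ∧ ¬ SamePair u w a b) ∧
  (∀ u w : V, adj u w → ¬ SamePair u w a b → (D (some u) (some w) ↔ ¬ D (some w) (some u)))

/-- `D` assigns to each edge of `adj` exactly one direction (used for
Variant-B orientations and for orientations of connector networks). -/
def IsOrientation (adj D : V → V → Prop) : Prop :=
  (∀ a b, D a b → adj a b) ∧ (∀ a b, adj a b → (D a b ↔ ¬ D b a))

/-- An orientation of a connector network with labelled leaves `L` and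
connector leaves `Uc` that is acyclic, in which every labelled leaf has
out-degree 0 and every vertex not in `L ∪ Uc` has in-degree ≥ 1 and
out-degree ≥ 1 (the standing hypotheses for the compatibility notions). -/
def GoodOrientation (adj D : V → V → Prop) (L Uc : Set V) : Prop :=
  IsOrientation adj D ∧ Acyclic D ∧ (∀ v ∈ L, outDeg D v = 0) ∧
  (∀ v, v ∉ L ∪ Uc → 1 ≤ inDeg D v ∧ 1 ≤ outDeg D v)

/-- F-compatible: every vertex of in-degree at least 2 has out-degree 1. -/
def FCompatible (D : V → V → Prop) : Prop := ∀ v, 2 ≤ inDeg D v → outDeg D v = 1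

/-- TC-compatible orientation of a connector network. -/
def TCCompatible (D : V → V → Prop) (L Uc : Set V) : Prop :=
  ∀ v, v ∉ L ∪ Uc → ∃ u, D v u ∧ (u ∈ L ∪ Uc ∨ (inDeg D u = 1 ∧ 1 ≤ outDeg D u))

/-- Strongly TC-compatible orientation of a connector network. -/
def StrongTCCompatible (D : V → V → Prop) (L Uc : Set V) : Prop :=
  ∀ v, v ∉ L ∪ Uc → ∃ u, D v u ∧ (u ∈ L ∨ (inDeg D u = 1 ∧ 1 ≤ outDeg D u))

end Prelude

namespace PaperFormalization

/-- Vertices of the root gadget: connector leaf `r`, internal vertices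
`v,w,x,y,z`, and labelled leaves `lf, lf'`. -/
inductive RGV : Type
  | r | v | w | x | y | z | lf | lf'

/-- The edges of the root gadget (one fixed orientation of each edge). -/
def rgBase : RGV → RGV → Prop
  | .r, .v => True
  | .v, .w => True
  | .v, .x => True
  | .w, .x => True
  | .w, .y => True
  | .x, .z => True
  | .y, .z => True
  | .y, .lf => True
  | .z, .lf' => True
  | _, _ => False

/-- Adjacency relation of the root gadget. -/
def rgAdj (a b : RGV) : Prop := rgBase a b ∨ rgBase b a

/-- Leaf set of the partner network of the root gadget (the connector leaf `r`
is regarded as a labelled leaf). -/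
def rgLeaves : Set RGV := {RGV.r, RGV.lf, RGV.lf'}

end PaperFormalization

/-!
The orientation: `ρ → w, x`, `w → v, y`, `v → r, x`, `x → z`, `z → y, ℓ'`, `y → ℓ`.
Its reticulations are `x` (parents `ρ, v`) and `y` (parents `w, z`); every other
non-leaf vertex has in-degree one, and each non-leaf vertex has a child among the
tree vertices `w, v, z` or the leaves `r, ℓ, ℓ'`. The order `ρ, w, v, x, z, y` followed
by the leaves is a topological order, so the orientation is acyclic.
-/

section Digraph

variable {V : Type*}

theorem acyclic_of_rank {α : Type*} [Preorder α] {D : V → V → Prop} (f : V → α)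
    (hf : ∀ a b, D a b → f a < f b) : Acyclic D := fun v hv =>
  lt_irrefl (f v) (Relation.transGen_minimal (r' := Function.onFun (· < ·) f) hf v v hv)

variable [Fintype V] (D : V → V → Prop) [DecidableRel D]

theorem inDeg_eq_card_filter (v : V) : inDeg D v = (Finset.univ.filter (D · v)).card := by
  rw [inDeg, Set.ncard_eq_toFinset_card', Set.toFinset_ofPred]

theorem outDeg_eq_card_filter (v : V) : outDeg D v = (Finset.univ.filter (D v ·)).card := by
  rw [outDeg, Set.ncard_eq_toFinset_card', Set.toFinset_ofPred]

end Digraph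

namespace PaperFormalization

deriving instance DecidableEq for RGV

instance : Fintype RGV :=
  ⟨{.r, .v, .w, .x, .y, .z, .lf, .lf'}, fun a => by cases a <;> decide⟩

instance : DecidableRel rgBase := fun a b => by
  cases a <;> cases b <;> first | exact .isTrue trivial | exact .isFalse id

instance : DecidableRel rgAdj := fun a b => by unfold rgAdj; infer_instance

instance (a b c d : RGV) : Decidable (SamePair a b c d) := by
  unfold SamePair; infer_instance

def wxOrientation : Option RGV → Option RGV → Bool
  | none, some .w | none, some .x => true
  | some .w, some .v | some .w, some .y => true
  | some .v, some .r | some .v, some .x => true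
  | some .x, some .z => true
  | some .z, some .y | some .z, some .lf' => true
  | some .y, some .lf => true
  | _, _ => false

abbrev wxArc (a b : Option RGV) : Prop := wxOrientation a b = true

def wxRank : Option RGV → ℕ
  | none => 0
  | some .w => 1
  | some .v => 2
  | some .x => 3
  | some .z => 4
  | some .y => 5
  | some .r | some .lf | some .lf' => 6

theorem wxArc_variantA : VariantA rgAdj RGV.w RGV.x wxArc :=
  ⟨Or.inl trivial, rfl, rfl, by decide, by decide, by decide, by decide⟩

theorem wxArc_acyclic : Acyclic wxArc :=
  acyclic_of_rank wxRank (by decide)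

theorem wxArc_leaves :
    {u | outDeg wxArc u = 0} = Option.some '' rgLeaves := by
  ext u
  simp only [Set.mem_ofPred_eq, outDeg_eq_card_filter, rgLeaves, Set.image_insert_eq,
    Set.image_singleton, Set.mem_insert_iff, Set.mem_singleton_iff]
  revert u
  decide

theorem wxArc_isRootedPseudoNetwork :
    IsRootedPseudoNetwork wxArc none (Option.some '' rgLeaves) := by
  refine ⟨wxArc_acyclic, by decide, ?_, ?_, ?_, ?_, wxArc_leaves, ?_⟩ <;>
    simp only [inDeg_eq_card_filter, outDeg_eq_card_filter] <;> decide

theorem wxArc_treeChild : TreeChild wxArc := by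
  simp only [TreeChild, IsTreeVertex, IsLeafVertex, inDeg_eq_card_filter,
    outDeg_eq_card_filter]
  decide

/-- Lemma `root_gadget`(i): the root gadget has a
`C_A`-orientation, for `C` the class of tree-child rooted pseudo networks,
whose root `ρ` subdivides the edge `{w,x}`. -/
theorem root_gadget_has_treechild_CA_orientation_at_wx :
    ∃ D : Option RGV → Option RGV → Prop,
      VariantA rgAdj RGV.w RGV.x D ∧
      IsRootedPseudoNetwork D none (Option.some '' rgLeaves) ∧
      TreeChild D :=
  ⟨wxArc, wxArc_variantA, wxArc_isRootedPseudoNetwork, wxArc_treeChild⟩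

end PaperFormalization
end

section
/- Let G be the root gadget and let C be the class of rooted pseudo networks that are tree-child. Then G is C_A-root-forcing; that is, there is no C_A-orientation of G whose root subdivides the edge {r,v} incident with the connector leaf r. -/
/-!
In a tree-child network no non-leaf vertex has only reticulations as children. Suppose the
root subdivides `{r, v}`. Then `v` has a tree-vertex child `a ∈ {w, x}`. As `v` is the only
parent of `a`, the other triangle vertex `b` and the pendant neighbour `c` of `a` are children
of `a`, and acyclicity gives `v → b`, so `b` is a reticulation. Hence `c` must be the tree-vertex
child of `a`, which forces `c → d` for the fourth vertex `d` of the square `a c d b`; but then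
the only child `d` of `b` has the two parents `b` and `c`.
-/

section Digraph

variable {V : Type*} {D : V → V → Prop}

lemma Acyclic.ne (h : Acyclic D) {a b : V} (hab : D a b) : a ≠ b :=
  fun e => h a (.single (e ▸ hab))

lemma Acyclic.asymm (h : Acyclic D) {a b : V} (hab : D a b) : ¬ D b a :=
  fun hba => h a (.tail (.single hab) hba)

variable [Finite V]

lemma outDeg_eq_zero_iff {v : V} : outDeg D v = 0 ↔ ∀ u, ¬ D v u := by
  simp [outDeg, Set.ncard_eq_zero (Set.toFinite _), Set.eq_empty_iff_forall_notMem]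

lemma eq_of_inDeg_lt_two {a b v : V} (hv : inDeg D v < 2) (ha : D a v) (hb : D b v) :
    a = b := by
  by_contra hab
  exact hv.not_ge ((Set.one_lt_ncard (Set.toFinite _)).mpr ⟨a, ha, b, hb, hab⟩)

lemma TreeChild.exists_tree_or_leaf_child (hTC : TreeChild D) {v u₀ : V} (h : D v u₀) :
    ∃ u, D v u ∧ (inDeg D u < 2 ∨ outDeg D u = 0) := by
  obtain ⟨u, hvu, hu⟩ := hTC v fun h0 => outDeg_eq_zero_iff.mp h0 u₀ h
  exact ⟨u, hvu, hu.imp_left fun ht : IsTreeVertex D u => by rw [ht.1]; norm_num⟩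

end Digraph

namespace PaperFormalization

def RGV.equivFin : RGV ≃ Fin 8 where
  toFun
    | .r => 0 | .v => 1 | .w => 2 | .x => 3 | .y => 4 | .z => 5 | .lf => 6 | .lf' => 7
  invFun := ![.r, .v, .w, .x, .y, .z, .lf, .lf']
  left_inv a := by cases a <;> rfl
  right_inv i := by fin_cases i <;> rfl

instance : DecidableEq RGV := RGV.equivFin.decidableEq

instance inst_s1 : Fintype RGV := Fintype.ofEquiv _ RGV.equivFin.symm

instance inst_s1_2 : DecidableRel rgBase := fun a b => by
  cases a <;> cases b <;> unfold rgBase <;> infer_instance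

instance inst_s1_3 : DecidableRel rgAdj := fun _ _ => inferInstanceAs (Decidable (_ ∨ _))

instance : DecidablePred (· ∈ rgLeaves) := fun a =>
  decidable_of_iff (a = .r ∨ a = .lf ∨ a = .lf') (by simp [rgLeaves])

def TreeChildRootedAtRV (D : Option RGV → Option RGV → Prop) : Prop :=
  VariantA rgAdj RGV.r RGV.v D ∧
    IsRootedPseudoNetwork D none (Option.some '' rgLeaves) ∧ TreeChild D

namespace TreeChildRootedAtRV

variable {D : Option RGV → Option RGV → Prop}

lemma acyclic (hD : TreeChildRootedAtRV D) : Acyclic D := hD.2.1.1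

lemma outDeg_eq_zero_iff_mem (hD : TreeChildRootedAtRV D) {a : RGV} :
    outDeg D (some a) = 0 ↔ a ∈ rgLeaves := by
  obtain ⟨-, -, -, -, -, -, hLeaves, -⟩ := hD.2.1
  simpa using Set.ext_iff.mp hLeaves (some a)

lemma adj_of_arc (hD : TreeChildRootedAtRV D) {a : RGV} {u : Option RGV}
    (h : D (some a) u) : ∃ b, u = some b ∧ rgAdj a b ∧ b ≠ .r := by
  obtain ⟨-, -, -, hNone, -, hArc, -⟩ := hD.1
  obtain _ | b := u
  · exact absurd h (hNone _)
  obtain ⟨hab, hne⟩ := hArc a b h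
  refine ⟨b, rfl, hab, ?_⟩
  rintro rfl
  cases a <;> simp_all [rgAdj, rgBase, SamePair]

lemma arc_or_arc (hD : TreeChildRootedAtRV D) {a b : RGV} (hab : rgAdj a b)
    (ha : a ∉ rgLeaves) (hb : b ∉ rgLeaves) : D (some a) (some b) ∨ D (some b) (some a) := by
  have hne : ¬ SamePair a b .r .v := by
    rintro (⟨rfl, -⟩ | ⟨-, rfl⟩) <;> simp_all [rgLeaves]
  obtain ⟨-, -, -, -, -, -, hOrient⟩ := hD.1
  exact or_iff_not_imp_right.mpr (hOrient a b hab hne).mpr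

lemma exists_tree_or_leaf_child (hD : TreeChildRootedAtRV D) {a : RGV} (ha : a ∉ rgLeaves) :
    ∃ u, D (some a) (some u) ∧ rgAdj a u ∧ u ≠ .r ∧ (inDeg D (some u) < 2 ∨ u ∈ rgLeaves) := by
  obtain ⟨u₀, hu₀⟩ : ∃ u₀, D (some a) u₀ := by
    by_contra! h
    exact ha (hD.outDeg_eq_zero_iff_mem.mp (outDeg_eq_zero_iff.mpr h))
  obtain ⟨_, hau, hu⟩ := hD.2.2.exists_tree_or_leaf_child hu₀
  obtain ⟨u, rfl, hadj, hur⟩ := hD.adj_of_arc hau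
  exact ⟨u, hau, hadj, hur, hu.imp_right hD.outDeg_eq_zero_iff_mem.mp⟩

lemma arc_of_inDeg_lt_two (hD : TreeChildRootedAtRV D) {p a u : RGV}
    (ha : inDeg D (some a) < 2) (hpa : D (some p) (some a)) (hau : rgAdj a u) (hup : u ≠ p)
    (ha' : a ∉ rgLeaves) (hu : u ∉ rgLeaves) : D (some a) (some u) :=
  (hD.arc_or_arc hau ha' hu).resolve_right fun hua =>
    hup (Option.some_injective _ (eq_of_inDeg_lt_two ha hua hpa))

/-- `hσ` uses the reflection `w ↔ x`, `y ↔ z` of the gadget to treat both children of `v`. -/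
lemma two_le_inDeg_of_arc_v (hD : TreeChildRootedAtRV D) {a b c d : RGV}
    (hσ : (a, b, c, d) = (.w, .x, .y, .z) ∨ (a, b, c, d) = (.x, .w, .z, .y))
    (hva : D (some .v) (some a)) : 2 ≤ inDeg D (some a) := by
  obtain ⟨hab, hvb, hac, hcd, nbr_a, nbr_b, ha, hb, hc, hd, hbv, hcv, hda, hcb⟩ :
      rgAdj a b ∧ rgAdj .v b ∧ rgAdj a c ∧ rgAdj c d ∧
      (∀ u, rgAdj a u → u = .v ∨ u = b ∨ u = c) ∧ (∀ u, rgAdj b u → u = .v ∨ u = a ∨ u = d) ∧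
      a ∉ rgLeaves ∧ b ∉ rgLeaves ∧ c ∉ rgLeaves ∧ d ∉ rgLeaves ∧
      b ≠ .v ∧ c ≠ .v ∧ d ≠ a ∧ c ≠ b := by
    obtain ⟨⟨⟩⟩ | ⟨⟨⟩⟩ := hσ <;> decide
  by_contra! ha2
  have hDab := hD.arc_of_inDeg_lt_two ha2 hva hab hbv ha hb
  have hDac := hD.arc_of_inDeg_lt_two ha2 hva hac hcv ha hc
  have hDvb : D (some .v) (some b) := (hD.arc_or_arc hvb (by decide) hb).resolve_right
    fun hDbv => hD.acyclic _ (.head hva (.head hDab (.single hDbv)))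
  have hb2 : ¬ inDeg D (some b) < 2 := fun hb2 =>
    hD.acyclic.ne hva (eq_of_inDeg_lt_two hb2 hDvb hDab)
  have hc2 : inDeg D (some c) < 2 := by
    obtain ⟨u, hau, hadj, -, hu⟩ := hD.exists_tree_or_leaf_child ha
    rcases nbr_a u hadj with rfl | rfl | rfl
    · exact absurd hva (hD.acyclic.asymm hau)
    · exact (hu.elim hb2 hb).elim
    · exact hu.resolve_right hc
  have hDcd := hD.arc_of_inDeg_lt_two hc2 hDac hcd hda hc hd
  obtain ⟨u, hbu, hadj, -, hu⟩ := hD.exists_tree_or_leaf_child hb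
  rcases nbr_b u hadj with rfl | rfl | rfl
  · exact hD.acyclic.asymm hDvb hbu
  · exact hD.acyclic.asymm hDab hbu
  · exact hcb (Option.some_injective _
      (eq_of_inDeg_lt_two (hu.resolve_right hd) hDcd hbu))

end TreeChildRootedAtRV

/-- Lemma `root_gadget`(ii): the root gadget is
`C_A`-root-forcing for `C` the class of tree-child rooted pseudo networks:
no `C_A`-orientation of it subdivides the edge `{r,v}` incident with the
connector leaf `r` with the new root vertex. -/
theorem root_gadget_is_CA_root_forcing :
    ¬ ∃ D : Option RGV → Option RGV → Prop,
        VariantA rgAdj RGV.r RGV.v D ∧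
        IsRootedPseudoNetwork D none (Option.some '' rgLeaves) ∧
        TreeChild D := by
  rintro ⟨D, (hD : TreeChildRootedAtRV D)⟩
  obtain ⟨a, hva, hadj, har, ha⟩ := hD.exists_tree_or_leaf_child (a := .v) (by decide)
  have ha_mem : a = .w ∨ a = .x :=
    (by decide : ∀ u, rgAdj .v u → u ≠ .r → u = .w ∨ u = .x) a hadj har
  obtain ⟨b, c, d, hσ⟩ : ∃ b c d : RGV, (a, b, c, d) = (.w, .x, .y, .z) ∨
      (a, b, c, d) = (.x, .w, .z, .y) := by
    rcases ha_mem with rfl | rfl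
    exacts [⟨_, _, _, .inl rfl⟩, ⟨_, _, _, .inr rfl⟩]
  have ha_leaf : a ∉ rgLeaves := by rcases ha_mem with rfl | rfl <;> decide
  exact (hD.two_le_inDeg_of_arc_v hσ hva).not_gt (ha.resolve_right ha_leaf)

end PaperFormalization
end

section
/- Let G be the connection gadget. There exists an orientation of G that is F-compatible and strongly TC-compatible in which each of the vertices u and v has in-degree 1 and out-degree 2, and in which (s,u) and (v,t) are arcs. -/
namespace PaperFormalization

/-- Vertices of the connection gadget: connector leaves `s,t`, internal
vertices `u,v,w,w'`, and labelled leaves `lf, lf'`. -/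
inductive CGV : Type
  | s | t | u | v | w | w' | lf | lf'

/-- The edges of the connection gadget (one fixed orientation of each edge). -/
def cgBase : CGV → CGV → Prop
  | .s, .u => True
  | .t, .v => True
  | .u, .v => True
  | .u, .w => True
  | .v, .w' => True
  | .w, .w' => True
  | .w, .lf => True
  | .w', .lf' => True
  | _, _ => False

/-- Adjacency relation of the connection gadget. -/
def cgAdj (a b : CGV) : Prop := cgBase a b ∨ cgBase b a

/-- Labelled leaves of the connection gadget. -/
def cgL : Set CGV := {CGV.lf, CGV.lf'}

/-- Connector (unlabelled) leaves of the connection gadget. -/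
def cgU : Set CGV := {CGV.s, CGV.t}

end PaperFormalization

namespace PaperFormalization

/-- The chosen orientation: `s→u, u→v, u→w, v→t, v→w', w'→w, w'→lf', w→lf`. -/
def cgD : CGV → CGV → Prop
  | .s, .u => True
  | .u, .v => True
  | .u, .w => True
  | .v, .t => True
  | .v, .w' => True
  | .w', .w => True
  | .w', .lf' => True
  | .w, .lf => True
  | _, _ => False

/-- A rank function certifying acyclicity of `cgD`. -/
def cgRank : CGV → ℕ
  | .s => 0 | .u => 1 | .v => 2 | .t => 3 | .w' => 3 | .w => 4 | .lf => 5 | .lf' => 5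

lemma cgD_rank : ∀ a b, cgD a b → cgRank a < cgRank b := by
  intro a b h
  cases a <;> cases b <;> simp_all [cgD, cgRank]

lemma cgD_acyclic : Acyclic cgD := by
  intro v h
  have key : ∀ a b, Relation.TransGen cgD a b → cgRank a < cgRank b := by
    intro a b hab
    induction hab with
    | single h => exact cgD_rank _ _ h
    | tail _ h ih => exact lt_trans ih (cgD_rank _ _ h)
  exact lt_irrefl _ (key v v h)

lemma cg_in_s : {x | cgD x CGV.s} = (∅ : Set CGV) := by ext x; cases x <;> simp [cgD]
lemma cg_in_t : {x | cgD x CGV.t} = {CGV.v} := by ext x; cases x <;> simp [cgD]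
lemma cg_in_u : {x | cgD x CGV.u} = {CGV.s} := by ext x; cases x <;> simp [cgD]
lemma cg_in_v : {x | cgD x CGV.v} = {CGV.u} := by ext x; cases x <;> simp [cgD]
lemma cg_in_w : {x | cgD x CGV.w} = {CGV.u, CGV.w'} := by ext x; cases x <;> simp [cgD]
lemma cg_in_w' : {x | cgD x CGV.w'} = {CGV.v} := by ext x; cases x <;> simp [cgD]
lemma cg_in_lf : {x | cgD x CGV.lf} = {CGV.w} := by ext x; cases x <;> simp [cgD]
lemma cg_in_lf' : {x | cgD x CGV.lf'} = {CGV.w'} := by ext x; cases x <;> simp [cgD]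

lemma cg_out_s : {x | cgD CGV.s x} = {CGV.u} := by ext x; cases x <;> simp [cgD]
lemma cg_out_t : {x | cgD CGV.t x} = (∅ : Set CGV) := by ext x; cases x <;> simp [cgD]
lemma cg_out_u : {x | cgD CGV.u x} = {CGV.v, CGV.w} := by ext x; cases x <;> simp [cgD]
lemma cg_out_v : {x | cgD CGV.v x} = {CGV.t, CGV.w'} := by ext x; cases x <;> simp [cgD]
lemma cg_out_w : {x | cgD CGV.w x} = {CGV.lf} := by ext x; cases x <;> simp [cgD]
lemma cg_out_w' : {x | cgD CGV.w' x} = {CGV.w, CGV.lf'} := by ext x; cases x <;> simp [cgD]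
lemma cg_out_lf : {x | cgD CGV.lf x} = (∅ : Set CGV) := by ext x; cases x <;> simp [cgD]
lemma cg_out_lf' : {x | cgD CGV.lf' x} = (∅ : Set CGV) := by ext x; cases x <;> simp [cgD]

lemma cg_inDeg : inDeg cgD CGV.s = 0 ∧ inDeg cgD CGV.t = 1 ∧ inDeg cgD CGV.u = 1 ∧
    inDeg cgD CGV.v = 1 ∧ inDeg cgD CGV.w = 2 ∧ inDeg cgD CGV.w' = 1 ∧
    inDeg cgD CGV.lf = 1 ∧ inDeg cgD CGV.lf' = 1 := by
  refine ⟨?_, ?_, ?_, ?_, ?_, ?_, ?_, ?_⟩ <;>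
    simp [inDeg, cg_in_s, cg_in_t, cg_in_u, cg_in_v, cg_in_w, cg_in_w', cg_in_lf, cg_in_lf',
      Set.ncard_singleton, Set.ncard_empty, Set.ncard_pair (show CGV.u ≠ CGV.w' by simp)]

lemma cg_outDeg : outDeg cgD CGV.s = 1 ∧ outDeg cgD CGV.t = 0 ∧ outDeg cgD CGV.u = 2 ∧
    outDeg cgD CGV.v = 2 ∧ outDeg cgD CGV.w = 1 ∧ outDeg cgD CGV.w' = 2 ∧
    outDeg cgD CGV.lf = 0 ∧ outDeg cgD CGV.lf' = 0 := by
  refine ⟨?_, ?_, ?_, ?_, ?_, ?_, ?_, ?_⟩ <;>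
    simp [outDeg, cg_out_s, cg_out_t, cg_out_u, cg_out_v, cg_out_w, cg_out_w', cg_out_lf,
      cg_out_lf', Set.ncard_singleton, Set.ncard_empty,
      Set.ncard_pair (show CGV.v ≠ CGV.w by simp),
      Set.ncard_pair (show CGV.t ≠ CGV.w' by simp),
      Set.ncard_pair (show CGV.w ≠ CGV.lf' by simp)]

/-- Lemma `connection_gadget`(i): the connection gadget has
an F-compatible and strongly TC-compatible orientation in which `u` and `v`
each have in-degree 1 and out-degree 2, and `(s,u)` and `(v,t)` are arcs. -/
theorem connection_gadget_orientation_su_vt :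
    ∃ D : CGV → CGV → Prop,
      GoodOrientation cgAdj D cgL cgU ∧
      FCompatible D ∧ StrongTCCompatible D cgL cgU ∧
      inDeg D CGV.u = 1 ∧ outDeg D CGV.u = 2 ∧
      inDeg D CGV.v = 1 ∧ outDeg D CGV.v = 2 ∧
      D CGV.s CGV.u ∧ D CGV.v CGV.t := by
  obtain ⟨his, hit, hiu, hiv, hiw, hiw', hilf, hilf'⟩ := cg_inDeg
  obtain ⟨hos, hot, hou, hov, how, how', holf, holf'⟩ := cg_outDeg
  refine ⟨cgD, ⟨⟨?_, ?_⟩, cgD_acyclic, ?_, ?_⟩, ?_, ?_, hiu, hou, hiv, hov, trivial, trivial⟩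
  · intro a b h; cases a <;> cases b <;> simp_all [cgD, cgAdj, cgBase]
  · intro a b h; cases a <;> cases b <;> simp_all [cgD, cgAdj, cgBase]
  · intro x hx
    rcases hx with h | h <;> subst h <;> assumption
  · intro x hx
    have hx1 : x ≠ CGV.lf ∧ x ≠ CGV.lf' ∧ x ≠ CGV.s ∧ x ≠ CGV.t := by
      refine ⟨?_, ?_, ?_, ?_⟩ <;> rintro rfl <;> exact hx (by simp [cgL, cgU])
    obtain ⟨h1, h2, h3, h4⟩ := hx1
    cases x <;> simp_all <;> omega
  · intro x hx
    cases x <;> omega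
  · intro x hx
    have hx1 : x ≠ CGV.lf ∧ x ≠ CGV.lf' ∧ x ≠ CGV.s ∧ x ≠ CGV.t := by
      refine ⟨?_, ?_, ?_, ?_⟩ <;> rintro rfl <;> exact hx (by simp [cgL, cgU])
    obtain ⟨h1, h2, h3, h4⟩ := hx1
    cases x
    · exact absurd rfl h3
    · exact absurd rfl h4
    · exact ⟨CGV.v, trivial, Or.inr ⟨hiv, by omega⟩⟩
    · exact ⟨CGV.w', trivial, Or.inr ⟨hiw', by omega⟩⟩
    · exact ⟨CGV.lf, trivial, Or.inl (by simp [cgL])⟩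
    · exact ⟨CGV.lf', trivial, Or.inl (by simp [cgL])⟩
    · exact absurd rfl h1
    · exact absurd rfl h2


end PaperFormalization
end

section
/- For n ≥ 1, let G be the caterpillar gadget with degree-5 vertices p_1, p_2, …, p_n. Then G has exactly one F-compatible orientation that contains the arc (r, p_n). -/
namespace PaperFormalization

/-- Vertices of the caterpillar gadget with `n` internal degree-5 vertices:
`p i` (for `i : Fin n`, with `p ⟨0,_⟩` playing the role of `p_1` and
`p ⟨n-1,_⟩` the role of `p_n`), connector leaves `r` and `x i`, and labelled
leaves `lf` (pendant at `p_1`) and `li i`, `li' i` (pendant at `p i`). -/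
inductive CatV (n : ℕ) : Type
  | p (i : Fin n) | x (i : Fin n) | r | lf | li (i : Fin n) | li' (i : Fin n)

/-- The edges of the caterpillar gadget (one fixed orientation of each edge). -/
def catBase {n : ℕ} : CatV n → CatV n → Prop
  | .p i, .p j => (i : ℕ) + 1 = (j : ℕ)
  | .p i, .r => (i : ℕ) = n - 1
  | .p i, .x j => i = j
  | .p i, .li j => i = j
  | .p i, .li' j => i = j
  | .p i, .lf => (i : ℕ) = 0
  | _, _ => False

/-- Adjacency relation of the caterpillar gadget. -/
def catAdj {n : ℕ} (a b : CatV n) : Prop := catBase a b ∨ catBase b a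

/-- Labelled leaves of the caterpillar gadget. -/
def catL (n : ℕ) : Set (CatV n) :=
  {v | match v with
    | .lf => True
    | .li _ => True
    | .li' _ => True
    | _ => False}

/-- Connector leaves of the caterpillar gadget. -/
def catU (n : ℕ) : Set (CatV n) :=
  {v | match v with
    | .r => True
    | .x _ => True
    | _ => False}

end PaperFormalization

/-!
Labelled leaves are sinks, so every spine vertex `p i` has out-degree at least 2 and hence, by
F-compatibility, in-degree at most 1. Starting from the arc `(r, p_n)` and walking down the spine,
the unique in-arc of each `p i` is forced to come from its neighbour towards `r`, and every other
edge at `p i` must point away from it. So any such orientation contains, hence equals, the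
orientation directing every edge away from `r`.
-/

section Orientation

variable {V : Type*} {adj D D' : V → V → Prop}

theorem acyclic_of_rank_lt (f : V → ℕ) (hf : ∀ a b, D a b → f b < f a) : Acyclic D := by
  have key : ∀ a b, Relation.TransGen D a b → f b < f a := fun a b h => by
    induction h with
    | single h => exact hf _ _ h
    | tail _ h ih => exact (hf _ _ h).trans ih
  exact fun v hv => lt_irrefl _ (key v v hv)

theorem IsOrientation.eq_of_le (hD : IsOrientation adj D) (hD' : IsOrientation adj D')
    (h : ∀ a b, D a b → D' a b) : D = D' := by
  funext a b
  refine propext ⟨h a b, fun hab => ?_⟩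
  have hadj := hD'.1 a b hab
  by_contra hn
  have hba : D b a := of_not_not fun h' => hn ((hD.2 a b hadj).mpr h')
  exact (hD'.2 a b hadj).mp hab (h b a hba)

theorem inDeg_le_one_of_two_le_outDeg (hF : FCompatible D) {v : V} (hv : 2 ≤ outDeg D v) :
    inDeg D v ≤ 1 := by
  by_contra h
  have := hF v (by omega)
  omega

variable [Finite V]

theorem IsOrientation.arc_of_outDeg_eq_zero (hD : IsOrientation adj D) {v w : V}
    (hvw : adj v w) (hw : outDeg D w = 0) : D v w :=
  (hD.2 v w hvw).mpr fun hwv => ((Set.ncard_eq_zero (Set.toFinite _)).mp hw).subset hwv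

theorem IsOrientation.arc_of_inDeg_le_one (hD : IsOrientation adj D) {u v w : V}
    (hv : inDeg D v ≤ 1) (huv : D u v) (hvw : adj v w) (hwu : w ≠ u) : D v w :=
  (hD.2 v w hvw).mpr fun hwv => hwu ((Set.ncard_le_one_iff (Set.toFinite _)).mp hv hwv huv)

end Orientation

namespace PaperFormalization

instance {n : ℕ} : Finite (CatV n) :=
  let f : CatV n → Fin n ⊕ Fin n ⊕ Fin n ⊕ Fin n ⊕ Bool
    | .p i => .inl i
    | .x i => .inr (.inl i)
    | .li i => .inr (.inr (.inl i))
    | .li' i => .inr (.inr (.inr (.inl i)))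
    | .r => .inr (.inr (.inr (.inr true)))
    | .lf => .inr (.inr (.inr (.inr false)))
  Finite.of_injective f fun a b hab => by cases a <;> cases b <;> simp_all [f]

/-- The orientation pointing every edge away from `r`. -/
def catD {n : ℕ} : CatV n → CatV n → Prop
  | .p j, .p i => (i : ℕ) + 1 = (j : ℕ)
  | .r, .p i => (i : ℕ) = n - 1
  | .p i, .x j => i = j
  | .p i, .li j => i = j
  | .p i, .li' j => i = j
  | .p i, .lf => (i : ℕ) = 0
  | _, _ => False

/-- The neighbour of `p i` on the side of `r`. -/
def catParent {n : ℕ} (i : Fin n) : CatV n :=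
  if h : (i : ℕ) + 1 < n then .p ⟨i + 1, h⟩ else .r

section CatD

variable {n : ℕ}

theorem catD_isOrientation : IsOrientation catAdj (catD (n := n)) := by
  constructor
  · intro a b h
    cases a <;> cases b <;> simp_all [catD, catAdj, catBase]
  · intro a b h
    cases a <;> cases b <;> simp_all [catD, catAdj, catBase, Fin.ext_iff]
    omega

theorem catD_acyclic : Acyclic (catD (n := n)) :=
  acyclic_of_rank_lt (fun | .p i => (i : ℕ) + 1 | .r => n + 1 | _ => 0) fun a b h => by
    cases a <;> cases b <;> simp_all [catD]
    omega

theorem catD_catParent (i : Fin n) : catD (catParent i) (.p i) := by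
  unfold catParent
  split_ifs <;> simp [catD]
  omega

theorem catD_inDeg_le_one (v : CatV n) : inDeg catD v ≤ 1 :=
  (Set.ncard_le_one_iff (Set.toFinite _)).mpr fun {a b} (ha : catD a v) (hb : catD b v) => by
    cases v <;> cases a <;> cases b <;> simp_all [catD, Fin.ext_iff] <;> omega

theorem catD_fCompatible : FCompatible (catD (n := n)) :=
  fun v hv => absurd (hv.trans (catD_inDeg_le_one v)) (by omega)

theorem catD_goodOrientation : GoodOrientation catAdj (catD (n := n)) (catL n) (catU n) := by
  refine ⟨catD_isOrientation, catD_acyclic, fun v hv => ?_, fun v hv => ?_⟩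
  · refine (Set.ncard_eq_zero (Set.toFinite _)).mpr (Set.eq_empty_of_forall_notMem fun u hu => ?_)
    cases v <;> cases u <;> simp_all [catD, catL]
  · cases v with
    | p i =>
      exact ⟨(Set.ncard_pos (Set.toFinite _)).mpr ⟨_, catD_catParent i⟩,
        (Set.ncard_pos (Set.toFinite _)).mpr ⟨.li i, by simp [catD]⟩⟩
    | _ => simp [catL, catU] at hv

theorem catD_cases {a b : CatV n} (h : catD a b) :
    (∃ i, a = catParent i ∧ b = .p i) ∨ ∃ i, a = .p i ∧ catAdj a b ∧ b ≠ catParent i := by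
  cases a with
  | p i =>
    refine .inr ⟨i, rfl, ?_⟩
    unfold catParent
    cases b <;> split_ifs <;> simp_all [catD, catAdj, catBase, Fin.ext_iff]
    omega
  | r =>
    cases b with
    | p i =>
      refine .inl ⟨i, ?_, rfl⟩
      unfold catParent
      split_ifs <;> simp_all [catD]
      omega
    | _ => exact h.elim
  | _ => cases b <;> exact h.elim

end CatD

theorem inDeg_p_le_one {n : ℕ} {D : CatV n → CatV n → Prop}
    (hD : GoodOrientation catAdj D (catL n) (catU n)) (hF : FCompatible D) (i : Fin n) : inDeg D (.p i) ≤ 1 := by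
  have hli : D (.p i) (.li i) := hD.1.arc_of_outDeg_eq_zero (.inl rfl) (hD.2.2.1 _ trivial)
  have hli' : D (.p i) (.li' i) := hD.1.arc_of_outDeg_eq_zero (.inl rfl) (hD.2.2.1 _ trivial)
  exact inDeg_le_one_of_two_le_outDeg hF
    ((Set.one_lt_ncard_iff (Set.toFinite _)).mpr ⟨_, _, hli, hli', by simp⟩)

theorem catParent_arc {m : ℕ} {D : CatV (m + 1) → CatV (m + 1) → Prop}
    (hD : IsOrientation catAdj D) (hin : ∀ i, inDeg D (.p i) ≤ 1) (hr : D .r (.p (Fin.last m)))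
    (i : Fin (m + 1)) : D (catParent i) (.p i) := by
  induction i using Fin.reverseInduction with
  | last =>
    have hparent : catParent (Fin.last m) = .r := by simp [catParent]
    rw [hparent]
    exact hr
  | cast i ih =>
    have hparent : catParent i.castSucc = .p i.succ := by simp [catParent, Fin.ext_iff]
    rw [hparent]
    refine hD.arc_of_inDeg_le_one (hin _) ih (.inr (by simp [catBase])) ?_
    unfold catParent
    split_ifs
    · simp [Fin.ext_iff]
      omega
    · simp

theorem arc_of_catD {m : ℕ} {D : CatV (m + 1) → CatV (m + 1) → Prop}
    (hD : GoodOrientation catAdj D (catL (m + 1)) (catU (m + 1))) (hF : FCompatible D)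
    (hr : D .r (.p (Fin.last m))) (a b : CatV (m + 1)) (h : catD a b) : D a b := by
  have hin := inDeg_p_le_one hD hF
  have hparent := catParent_arc hD.1 hin hr
  obtain ⟨i, rfl, rfl⟩ | ⟨i, rfl, hadj, hne⟩ := catD_cases h
  · exact hparent i
  · exact hD.1.arc_of_inDeg_le_one (hin i) (hparent i) hadj hne

/-- Lemma `caterpillar_gadget`, uniqueness part: for `n ≥ 1`
the caterpillar gadget has exactly one F-compatible orientation containing the
arc `(r, p_n)`. -/
theorem caterpillar_unique_F_compatible_orientation (n : ℕ) (hn : 1 ≤ n) :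
    ∃! D : CatV n → CatV n → Prop,
      GoodOrientation catAdj D (catL n) (catU n) ∧
      FCompatible D ∧
      D CatV.r (CatV.p ⟨n - 1, by omega⟩) := by
  refine ⟨catD, ⟨catD_goodOrientation, catD_fCompatible, rfl⟩, ?_⟩
  rintro D ⟨hD, hF, hrD⟩
  obtain ⟨m, rfl⟩ := Nat.exists_eq_add_of_le' hn
  exact (catD_isOrientation.eq_of_le hD.1 (arc_of_catD hD hF hrD)).symm

end PaperFormalization
end

section
/- Let G be the degree-5 root gadget and let C be the class of tree-child rooted phylogenetic networks. Then G has a funneled C_A-orientation whose root ρ subdivides the edge {u,u'}. -/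
namespace PaperFormalization

/-- Vertices of the degree-5 root gadget: connector leaf `r`, internal
vertices `s,u,u',v,v'`, two pendant labelled leaves `ul k` at `u` and
`ul' k` at `u'`, and three pendant labelled leaves `vl k` at `v` and
`vl' k` at `v'`. -/
inductive RG5 : Type
  | r | s | u | u' | v | v'
  | ul (k : Fin 2) | ul' (k : Fin 2) | vl (k : Fin 3) | vl' (k : Fin 3)

/-- The edges of the degree-5 root gadget (one fixed orientation of each edge). -/
def rg5Base : RG5 → RG5 → Prop
  | .r, .s => True
  | .s, .u => True
  | .s, .u' => True
  | .s, .v => True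
  | .s, .v' => True
  | .u, .u' => True
  | .u, .v => True
  | .u', .v' => True
  | .u, .ul _ => True
  | .u', .ul' _ => True
  | .v, .vl _ => True
  | .v', .vl' _ => True
  | _, _ => False

/-- Adjacency relation of the degree-5 root gadget. -/
def rg5Adj (a b : RG5) : Prop := rg5Base a b ∨ rg5Base b a

/-- Leaf set of the partner network of the degree-5 root gadget (`r` regarded
as a labelled leaf). -/
def rg5Leaves : Set RG5 :=
  {w | match w with
    | .r => True
    | .ul _ => True
    | .ul' _ => True
    | .vl _ => True
    | .vl' _ => True
    | _ => False}

end PaperFormalization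

namespace PaperFormalization

open Finset

section Digraph

variable {V : Type*}

theorem acyclic_of_strictMono_rank {α : Type*} [Preorder α] {D : V → V → Prop} (rank : V → α)
    (h : ∀ a b, D a b → rank a < rank b) : Acyclic D := fun _ hv =>
  lt_irrefl _ (Relation.transGen_eq_self (r := ((· < ·) : α → α → Prop)) ▸ hv.lift rank h)

variable [Fintype V] (D : V → V → Prop) [DecidableRel D]

theorem inDeg_eq_card_filter (v : V) : inDeg D v = #(univ.filter fun u => D u v) := by
  rw [inDeg, ← Set.ncard_coe_finset, coe_filter]; simp only [mem_univ, true_and]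

theorem outDeg_eq_card_filter (v : V) : outDeg D v = #(univ.filter fun u => D v u) := by
  rw [outDeg, ← Set.ncard_coe_finset, coe_filter]; simp only [mem_univ, true_and]

end Digraph

deriving instance DecidableEq, Fintype for RG5

instance : DecidableRel rg5Base := fun a b => by
  cases a <;> cases b <;> simp only [rg5Base] <;> infer_instance

instance : DecidableRel rg5Adj := fun _ _ => inferInstanceAs (Decidable (_ ∨ _))

instance : DecidablePred (· ∈ rg5Leaves) := fun w => by
  cases w <;> simp only [rg5Leaves, Set.mem_ofPred_eq] <;> infer_instance

/-- The only reticulation is `s`, fed by `u, u', v, v'` and passing on to the leaf `r`, so the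
orientation is funneled; it is tree-child because the root's children `u, u'` are tree vertices
and every other internal vertex has a leaf child. -/
def rg5ArcUU : Option RG5 → Option RG5 → Bool
  | none, some .u | none, some .u' => true
  | some .u, some .s | some .u, some .v | some .u, some (.ul _) => true
  | some .u', some .s | some .u', some .v' | some .u', some (.ul' _) => true
  | some .v, some .s | some .v, some (.vl _) => true
  | some .v', some .s | some .v', some (.vl' _) => true
  | some .s, some .r => true
  | _, _ => false

def rg5OrientationUU (a b : Option RG5) : Prop := rg5ArcUU a b

instance : DecidableRel rg5OrientationUU := fun a b => inferInstanceAs (Decidable (rg5ArcUU a b))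

def rg5DepthUU : Option RG5 → ℕ
  | none => 0
  | some .u | some .u' => 1
  | some .v | some .v' => 2
  | some .s => 3
  | some _ => 4

theorem acyclic_rg5OrientationUU : Acyclic rg5OrientationUU :=
  acyclic_of_strictMono_rank rg5DepthUU (by decide)

theorem variantA_rg5OrientationUU : VariantA rg5Adj .u .u' rg5OrientationUU := by
  unfold VariantA SamePair; decide

theorem isRootedPhyloNetwork_rg5OrientationUU :
    IsRootedPhyloNetwork rg5OrientationUU none (some '' rg5Leaves) := by
  simp only [IsRootedPhyloNetwork, Set.ext_iff, Set.mem_ofPred_eq, Set.mem_image,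
    inDeg_eq_card_filter, outDeg_eq_card_filter]
  exact ⟨acyclic_rg5OrientationUU, by decide⟩

theorem treeChild_rg5OrientationUU : TreeChild rg5OrientationUU := by
  simp only [TreeChild, IsLeafVertex, IsTreeVertex, inDeg_eq_card_filter, outDeg_eq_card_filter]
  decide

theorem funneled_rg5OrientationUU : Funneled rg5OrientationUU := by
  simp only [Funneled, inDeg_eq_card_filter, outDeg_eq_card_filter]
  decide

/-- Lemma `root_gadget_deg5`(i): the degree-5 root gadget
has a funneled `C_A`-orientation, for `C` the class of tree-child rooted
phylogenetic networks, whose root `ρ` subdivides the edge `{u,u'}`. -/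
theorem deg5_root_gadget_funneled_treechild_CA_orientation_at_uu' :
    ∃ D : Option RG5 → Option RG5 → Prop,
      VariantA rg5Adj RG5.u RG5.u' D ∧
      IsRootedPhyloNetwork D none (Option.some '' rg5Leaves) ∧
      TreeChild D ∧ Funneled D :=
  ⟨rg5OrientationUU, variantA_rg5OrientationUU, isRootedPhyloNetwork_rg5OrientationUU,
    treeChild_rg5OrientationUU, funneled_rg5OrientationUU⟩

end PaperFormalization
end

section
/- Let G be the degree-5 root gadget and let C' be the class of funneled rooted phylogenetic networks. Then G is C'_A-root-forcing; that is, there is no C'_A-orientation of G whose root subdivides the edge {r,s} incident with the connector leaf r. -/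
deriving instance DecidableEq for PaperFormalization.RG5
deriving instance Fintype for PaperFormalization.RG5

namespace PaperFormalization

section Aux

variable {D : Option RG5 → Option RG5 → Prop}

lemma aux_uniq_in (x : Option RG5) (hx : inDeg D x = 1) :
    ∀ a b, D a x → D b x → a = b := by
  intro a b ha hb
  obtain ⟨c, hc⟩ := Set.ncard_eq_one.mp hx
  have ha' : a ∈ {u | D u x} := ha
  have hb' : b ∈ {u | D u x} := hb
  rw [hc] at ha' hb'
  simp only [Set.mem_singleton_iff] at ha' hb'
  rw [ha', hb']

lemma aux_ex_in (x : Option RG5) (hx : inDeg D x = 1) : ∃ a, D a x := by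
  obtain ⟨c, hc⟩ := Set.ncard_eq_one.mp hx
  refine ⟨c, ?_⟩
  have : c ∈ {u | D u x} := by rw [hc]; exact rfl
  exact this

lemma aux_two_le_out (x a b : Option RG5) (hab : a ≠ b) (ha : D x a) (hb : D x b) :
    2 ≤ outDeg D x := by
  have hsub : ({a, b} : Set (Option RG5)) ⊆ {u | D x u} := by
    rintro y (rfl | rfl)
    · exact ha
    · exact hb
  have h2 : ({a, b} : Set (Option RG5)).ncard = 2 := Set.ncard_pair hab
  have := Set.ncard_le_ncard hsub (Set.toFinite _)
  rw [h2] at this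
  exact this

lemma adj_of_u : ∀ w, rg5Adj w RG5.u →
    w = RG5.s ∨ w = RG5.u' ∨ w = RG5.v ∨ ∃ k, w = RG5.ul k := by
  intro w h
  cases w <;> simp_all [rg5Adj, rg5Base]

lemma adj_of_u' : ∀ w, rg5Adj w RG5.u' →
    w = RG5.s ∨ w = RG5.u ∨ w = RG5.v' ∨ ∃ k, w = RG5.ul' k := by
  intro w h
  cases w <;> simp_all [rg5Adj, rg5Base]

lemma adj_of_v : ∀ w, rg5Adj w RG5.v →
    w = RG5.s ∨ w = RG5.u ∨ ∃ k, w = RG5.vl k := by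
  intro w h
  cases w <;> simp_all [rg5Adj, rg5Base]

lemma adj_of_v' : ∀ w, rg5Adj w RG5.v' →
    w = RG5.s ∨ w = RG5.u' ∨ ∃ k, w = RG5.vl' k := by
  intro w h
  cases w <;> simp_all [rg5Adj, rg5Base]

end Aux

/-- Lemma `root_gadget_deg5`(ii): the degree-5 root gadget
is `C'_A`-root-forcing, for `C'` the class of funneled rooted phylogenetic
networks: no `C'_A`-orientation of it subdivides the edge `{r,s}` incident
with the connector leaf `r` with the new root vertex. -/
theorem deg5_root_gadget_is_funneled_CA_root_forcing :
    ¬ ∃ D : Option RG5 → Option RG5 → Prop,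
        VariantA rg5Adj RG5.r RG5.s D ∧
        IsRootedPhyloNetwork D none (Option.some '' rg5Leaves) ∧
        Funneled D := by
  rintro ⟨D, ⟨hrs, hDr, hDs, hno, hrootchild, harc, hor⟩, hP, hF⟩
  obtain ⟨hacy, hirr, hinρ, houtρ, hρuniq, hleafin, hleafset, hint⟩ := hP
  -- labelled leaves have no outgoing arcs
  have hleafout : ∀ ℓ ∈ rg5Leaves, ∀ x, ¬ D (some ℓ) x := by
    intro ℓ hℓ x hx
    have h0 : outDeg D (some ℓ) = 0 := by
      have hmem : (some ℓ : Option RG5) ∈ {v | outDeg D v = 0} := by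
        rw [hleafset]; exact ⟨ℓ, hℓ, rfl⟩
      exact hmem
    have hemp := (Set.ncard_eq_zero (Set.toFinite _)).mp h0
    rw [Set.eq_empty_iff_forall_notMem] at hemp
    exact hemp x hx
  -- asymmetry of arcs between internal vertices
  have hasym : ∀ a b : RG5, D (some a) (some b) → ¬ D (some b) (some a) := by
    intro a b hab
    obtain ⟨hadj, hnsp⟩ := harc a b hab
    exact (hor a b hadj hnsp).mp hab
  -- arcs into pendant leaves
  have hul : ∀ k, D (some RG5.u) (some (RG5.ul k)) := fun k =>
    (hor RG5.u (RG5.ul k) (Or.inl trivial) (by simp [SamePair])).mpr (hleafout (RG5.ul k) trivial _)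
  have hul' : ∀ k, D (some RG5.u') (some (RG5.ul' k)) := fun k =>
    (hor RG5.u' (RG5.ul' k) (Or.inl trivial) (by simp [SamePair])).mpr (hleafout (RG5.ul' k) trivial _)
  have hvl : ∀ k, D (some RG5.v) (some (RG5.vl k)) := fun k =>
    (hor RG5.v (RG5.vl k) (Or.inl trivial) (by simp [SamePair])).mpr (hleafout (RG5.vl k) trivial _)
  have hvl' : ∀ k, D (some RG5.v') (some (RG5.vl' k)) := fun k =>
    (hor RG5.v' (RG5.vl' k) (Or.inl trivial) (by simp [SamePair])).mpr (hleafout (RG5.vl' k) trivial _)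
  -- u, u', v, v' have out-degree at least 2, hence in-degree exactly 1
  have indeg_one : ∀ x : RG5, 2 ≤ outDeg D (some x) → inDeg D (some x) = 1 := by
    intro x h2
    have hne : outDeg D (some x) ≠ 0 := by omega
    rcases hint (some x) (by simp) hne with ⟨h1, _⟩ | ⟨h2', _⟩
    · exact h1
    · have := hF _ h2'
      omega
  have hIu : inDeg D (some RG5.u) = 1 :=
    indeg_one _ (aux_two_le_out _ _ _ (by simp) (hul 0) (hul 1))
  have hIu' : inDeg D (some RG5.u') = 1 :=
    indeg_one _ (aux_two_le_out _ _ _ (by simp) (hul' 0) (hul' 1))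
  have hIv : inDeg D (some RG5.v) = 1 :=
    indeg_one _ (aux_two_le_out _ _ _ (by simp) (hvl 0) (hvl 1))
  have hIv' : inDeg D (some RG5.v') = 1 :=
    indeg_one _ (aux_two_le_out _ _ _ (by simp) (hvl' 0) (hvl' 1))
  -- main case analysis on the direction of the edge {u, u'}
  by_cases h1 : D (some RG5.u) (some RG5.u')
  · -- u → u'
    have hns : ¬ D (some RG5.s) (some RG5.u') := fun h => by
      have := aux_uniq_in (D := D) _ hIu' _ _ h h1; simp at this
    have hu's : D (some RG5.u') (some RG5.s) :=
      (hor RG5.u' RG5.s (Or.inr trivial) (by simp [SamePair])).mpr hns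
    have hnv' : ¬ D (some RG5.v') (some RG5.u') := fun h => by
      have := aux_uniq_in (D := D) _ hIu' _ _ h h1; simp at this
    have hu'v' : D (some RG5.u') (some RG5.v') :=
      (hor RG5.u' RG5.v' (Or.inl trivial) (by simp [SamePair])).mpr hnv'
    by_cases h2 : D (some RG5.u) (some RG5.v)
    · -- u → v : then the in-arc of u must come from s, giving cycle s → u → u' → s
      obtain ⟨a, ha⟩ := aux_ex_in (D := D) _ hIu
      have hsu : D (some RG5.s) (some RG5.u) := by
        cases a with
        | none =>
          rcases hrootchild _ ha with h | h <;> exact RG5.noConfusion h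
        | some w =>
          rcases adj_of_u w (harc _ _ ha).1 with rfl | rfl | rfl | ⟨k, rfl⟩
          · exact ha
          · exact absurd ha (hasym _ _ h1)
          · exact absurd ha (hasym _ _ h2)
          · exact absurd ha (hleafout _ (by trivial) _)
      exact hacy _ (Relation.TransGen.head hsu
        (Relation.TransGen.head h1 (Relation.TransGen.single hu's)))
    · -- v → u : then u → s and the in-arc of v must come from s, cycle s → v → u → s
      have hvu : D (some RG5.v) (some RG5.u) :=
        (hor RG5.v RG5.u (Or.inr trivial) (by simp [SamePair])).mpr h2
      have hnsu : ¬ D (some RG5.s) (some RG5.u) := fun h => by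
        have := aux_uniq_in (D := D) _ hIu _ _ h hvu; simp at this
      have hus : D (some RG5.u) (some RG5.s) :=
        (hor RG5.u RG5.s (Or.inr trivial) (by simp [SamePair])).mpr hnsu
      obtain ⟨a, ha⟩ := aux_ex_in (D := D) _ hIv
      have hsv : D (some RG5.s) (some RG5.v) := by
        cases a with
        | none =>
          rcases hrootchild _ ha with h | h <;> exact RG5.noConfusion h
        | some w =>
          rcases adj_of_v w (harc _ _ ha).1 with rfl | rfl | ⟨k, rfl⟩
          · exact ha
          · exact absurd ha h2
          · exact absurd ha (hleafout _ (by trivial) _)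
      exact hacy _ (Relation.TransGen.head hsv
        (Relation.TransGen.head hvu (Relation.TransGen.single hus)))
  · -- u' → u
    have hu'u : D (some RG5.u') (some RG5.u) :=
      (hor RG5.u' RG5.u (Or.inr trivial) (by simp [SamePair])).mpr h1
    have hnsu : ¬ D (some RG5.s) (some RG5.u) := fun h => by
      have := aux_uniq_in (D := D) _ hIu _ _ h hu'u; simp at this
    have hus : D (some RG5.u) (some RG5.s) :=
      (hor RG5.u RG5.s (Or.inr trivial) (by simp [SamePair])).mpr hnsu
    by_cases h2 : D (some RG5.u') (some RG5.v')
    · -- u' → v' : in-arc of u' must come from s, cycle s → u' → u → s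
      obtain ⟨a, ha⟩ := aux_ex_in (D := D) _ hIu'
      have hsu' : D (some RG5.s) (some RG5.u') := by
        cases a with
        | none =>
          rcases hrootchild _ ha with h | h <;> exact RG5.noConfusion h
        | some w =>
          rcases adj_of_u' w (harc _ _ ha).1 with rfl | rfl | rfl | ⟨k, rfl⟩
          · exact ha
          · exact absurd ha (fun _ => (hasym _ _ hu'u) ha)
          · exact absurd ha (hasym _ _ h2)
          · exact absurd ha (hleafout _ (by trivial) _)
      exact hacy _ (Relation.TransGen.head hsu'
        (Relation.TransGen.head hu'u (Relation.TransGen.single hus)))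
    · -- v' → u' : then u' → s and the in-arc of v' must come from s, cycle s → v' → u' → s
      have hv'u' : D (some RG5.v') (some RG5.u') :=
        (hor RG5.v' RG5.u' (Or.inr trivial) (by simp [SamePair])).mpr h2
      have hnsu' : ¬ D (some RG5.s) (some RG5.u') := fun h => by
        have := aux_uniq_in (D := D) _ hIu' _ _ h hv'u'; simp at this
      have hu's : D (some RG5.u') (some RG5.s) :=
        (hor RG5.u' RG5.s (Or.inr trivial) (by simp [SamePair])).mpr hnsu'
      obtain ⟨a, ha⟩ := aux_ex_in (D := D) _ hIv'
      have hsv' : D (some RG5.s) (some RG5.v') := by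
        cases a with
        | none =>
          rcases hrootchild _ ha with h | h <;> exact RG5.noConfusion h
        | some w =>
          rcases adj_of_v' w (harc _ _ ha).1 with rfl | rfl | ⟨k, rfl⟩
          · exact ha
          · exact absurd ha h2
          · exact absurd ha (hleafout _ (by trivial) _)
      exact hacy _ (Relation.TransGen.head hsv'
        (Relation.TransGen.head hv'u' (Relation.TransGen.single hu's)))

end PaperFormalization
end

section
/- Let G be the degree-5 root gadget and let C be the class of tree-child rooted phylogenetic networks. Then G has a funneled C_B-orientation whose root ρ is one of the labelled leaves adjacent to the vertex u. -/
namespace PaperFormalization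

deriving instance DecidableEq, Fintype for RG5

instance instDecRg5Base (a b : RG5) : Decidable (rg5Base a b) := by
  cases a <;> cases b <;> first | exact isTrue trivial | exact isFalse (fun h => h)

instance instDecRg5Adj (a b : RG5) : Decidable (rg5Adj a b) :=
  inferInstanceAs (Decidable (_ ∨ _))

instance instDecLeaves (v : RG5) : Decidable (v ∈ rg5Leaves) := by
  cases v <;> first | exact isTrue trivial | exact isFalse (fun h => h)

/-- The chosen orientation (root at leaf `ul 0`). -/
def rg5D : RG5 → RG5 → Bool
  | .ul k, .u => k == 0
  | .u, .ul k => k == 1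
  | .u, .s => true
  | .u, .u' => true
  | .u, .v => true
  | .u', .s => true
  | .u', .v' => true
  | .u', .ul' _ => true
  | .v, .s => true
  | .v, .vl _ => true
  | .v', .s => true
  | .v', .vl' _ => true
  | .s, .r => true
  | _, _ => false

/-- Rank function certifying acyclicity. -/
def rg5Rank : RG5 → ℕ
  | .ul k => if k = 0 then 0 else 6
  | .u => 1
  | .u' => 2
  | .v => 2
  | .v' => 3
  | .s => 5
  | _ => 6

lemma rg5Rank_lt : ∀ a b, rg5D a b = true → rg5Rank a < rg5Rank b := by decide

lemma ncard_filter (P : RG5 → Prop) [DecidablePred P] :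
    {x | P x}.ncard = (Finset.univ.filter P).card := by
  rw [Set.ncard_eq_toFinset_card']; simp [Set.toFinset_setOf]

end PaperFormalization

namespace PaperFormalization

/-- Lemma `root_gadget_deg5`(iii): the degree-5 root gadget
has a funneled `C_B`-orientation, for `C` the class of tree-child rooted
phylogenetic networks, whose root `ρ` is one of the labelled leaves adjacent
to the vertex `u`. -/
theorem deg5_root_gadget_funneled_treechild_CB_orientation_at_leaf :
    ∃ (k : Fin 2) (D : RG5 → RG5 → Prop),
      IsOrientation rg5Adj D ∧
      IsRootedPhyloNetwork D (RG5.ul k) (rg5Leaves \ {RG5.ul k}) ∧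
      TreeChild D ∧ Funneled D := by
  classical
  refine ⟨0, fun a b => rg5D a b = true, ?_, ?_, ?_, ?_⟩
  · constructor
    · decide
    · decide
  · have hin : ∀ v, inDeg (fun a b => rg5D a b = true) v
        = (Finset.univ.filter (fun u => rg5D u v = true)).card := fun v => ncard_filter _
    have hout : ∀ v, outDeg (fun a b => rg5D a b = true) v
        = (Finset.univ.filter (fun u => rg5D v u = true)).card := fun v => ncard_filter _
    have hacy : Acyclic (fun a b => rg5D a b = true) := by
      intro v h
      have key : ∀ a b, Relation.TransGen (fun x y => rg5D x y = true) a b →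
          rg5Rank a < rg5Rank b := by
        intro a b h
        induction h with
        | single h => exact rg5Rank_lt _ _ h
        | tail _ h ih => exact ih.trans (rg5Rank_lt _ _ h)
      exact lt_irrefl _ (key v v h)
    refine ⟨hacy, by decide, ?_, ?_, ?_, ?_, ?_, ?_⟩
    · rw [hin]; decide
    · rw [hout]; decide
    · intro v hv; rw [hin] at hv; revert hv; revert v; decide
    · intro v hv; rw [hout] at hv; rw [hin]; revert hv; revert v; decide
    · ext v
      simp only [Set.mem_setOf_eq, hout, Set.mem_diff, Set.mem_singleton_iff]
      revert v; decide
    · intro v hv hv2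
      rw [hout] at hv2 ⊢; rw [hin]
      revert hv2 hv; revert v; decide
  · intro v hv
    simp only [IsLeafVertex, IsTreeVertex, outDeg, inDeg, ncard_filter] at *
    revert hv; revert v; decide
  · intro v hv
    simp only [inDeg, outDeg, ncard_filter] at *
    revert hv; revert v; decide


end PaperFormalization
end

section
/- Let G be the degree-5 root gadget and let C' be the class of funneled rooted phylogenetic networks. Then G is C'_B-root-forcing; that is, there is no C'_B-orientation of G that chooses the connector leaf r to be the root. -/
namespace PaperFormalization

deriving instance DecidableEq, Fintype for RG5

open RG5

private lemma two_le_out {D : RG5 → RG5 → Prop} {x a b : RG5}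
    (h1 : D x a) (h2 : D x b) (hab : a ≠ b) : 2 ≤ outDeg D x := by
  have hsub : ({a, b} : Set RG5) ⊆ {c | D x c} := by
    rintro c (rfl | rfl) <;> assumption
  calc 2 = ({a, b} : Set RG5).ncard := (Set.ncard_pair hab).symm
    _ ≤ _ := Set.ncard_le_ncard hsub (Set.toFinite _)

private lemma two_le_in {D : RG5 → RG5 → Prop} {x a b : RG5}
    (h1 : D a x) (h2 : D b x) (hab : a ≠ b) : 2 ≤ inDeg D x := by
  have hsub : ({a, b} : Set RG5) ⊆ {c | D c x} := by
    rintro c (rfl | rfl) <;> assumption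
  calc 2 = ({a, b} : Set RG5).ncard := (Set.ncard_pair hab).symm
    _ ≤ _ := Set.ncard_le_ncard hsub (Set.toFinite _)

/-- Lemma `root_gadget_deg5`(iv): the degree-5 root gadget
is `C'_B`-root-forcing, for `C'` the class of funneled rooted phylogenetic
networks: no `C'_B`-orientation of it chooses the connector leaf `r` as the
root. -/
theorem deg5_root_gadget_is_funneled_CB_root_forcing :
    ¬ ∃ D : RG5 → RG5 → Prop,
        IsOrientation rg5Adj D ∧
        IsRootedPhyloNetwork D RG5.r (rg5Leaves \ {RG5.r}) ∧
        Funneled D := by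
  rintro ⟨D, hor, ⟨hacy, hirr, hinr, houtr, hmin, hlin, hleaves, hint⟩, hfun⟩
  have flip : ∀ a b : RG5, rg5Adj a b → ¬ D a b → D b a := fun a b hadj h =>
    (hor.2 b a (Or.symm hadj)).mpr h
  have hnr : ∀ w, ¬ D w r := by
    simp only [inDeg] at hinr
    rw [Set.ncard_eq_zero (Set.toFinite _), Set.eq_empty_iff_forall_notMem] at hinr
    exact hinr
  have hDrs : D r s := flip s r (Or.inr trivial) (hnr s)
  have hleaf0 : ∀ x, x ∈ rg5Leaves \ {r} → ∀ w, ¬ D x w := by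
    intro x hx
    have hx0 : outDeg D x = 0 := (Set.ext_iff.mp hleaves x).mpr hx
    simp only [outDeg] at hx0
    rw [Set.ncard_eq_zero (Set.toFinite _), Set.eq_empty_iff_forall_notMem] at hx0
    exact hx0
  have hul : ∀ k : Fin 2, D u (ul k) := fun k =>
    flip (ul k) u (Or.inr trivial) (hleaf0 (ul k) ⟨trivial, fun h => RG5.noConfusion h⟩ u)
  have hul' : ∀ k : Fin 2, D u' (ul' k) := fun k =>
    flip (ul' k) u' (Or.inr trivial) (hleaf0 (ul' k) ⟨trivial, fun h => RG5.noConfusion h⟩ u')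
  have hvl : ∀ k : Fin 3, D v (vl k) := fun k =>
    flip (vl k) v (Or.inr trivial) (hleaf0 (vl k) ⟨trivial, fun h => RG5.noConfusion h⟩ v)
  have hvl' : ∀ k : Fin 3, D v' (vl' k) := fun k =>
    flip (vl' k) v' (Or.inr trivial) (hleaf0 (vl' k) ⟨trivial, fun h => RG5.noConfusion h⟩ v')
  have out_u : 2 ≤ outDeg D u := two_le_out (hul 0) (hul 1) (by decide)
  have out_u' : 2 ≤ outDeg D u' := two_le_out (hul' 0) (hul' 1) (by decide)
  have out_v : 2 ≤ outDeg D v := two_le_out (hvl 0) (hvl 1) (by decide)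
  have out_v' : 2 ≤ outDeg D v' := two_le_out (hvl' 0) (hvl' 1) (by decide)
  have noIn2 : ∀ x a b : RG5, 2 ≤ outDeg D x → D a x → D b x → a ≠ b → False :=
    fun x a b h2 ha hb hab => by have := hfun x (two_le_in ha hb hab); omega
  have cyc : ∀ x y z : RG5, D x y → D y z → D z x → False := fun x y z h1 h2 h3 =>
    hacy x (Relation.TransGen.head h1 (Relation.TransGen.head h2 (Relation.TransGen.single h3)))
  rcases Classical.em (D s u) with hsu | hsu <;>
    rcases Classical.em (D s u') with hsu' | hsu' <;>
      rcases Classical.em (D s v) with hsv | hsv <;>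
        rcases Classical.em (D s v') with hsv' | hsv'
  · -- all forward
    have huu' : D u u' :=
      flip u' u (Or.inr trivial) (fun h => noIn2 u s u' out_u hsu h (by decide))
    exact noIn2 u' s u out_u' hsu' huu' (by decide)
  · exact noIn2 s r v' (two_le_out hsu hsu' (by decide)) hDrs
      (flip s v' (Or.inl trivial) hsv') (by decide)
  · exact noIn2 s r v (two_le_out hsu hsu' (by decide)) hDrs
      (flip s v (Or.inl trivial) hsv) (by decide)
  · exact noIn2 s r v (two_le_out hsu hsu' (by decide)) hDrs
      (flip s v (Or.inl trivial) hsv) (by decide)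
  · exact noIn2 s r u' (two_le_out hsu hsv (by decide)) hDrs
      (flip s u' (Or.inl trivial) hsu') (by decide)
  · exact noIn2 s r u' (two_le_out hsu hsv (by decide)) hDrs
      (flip s u' (Or.inl trivial) hsu') (by decide)
  · exact noIn2 s r u' (two_le_out hsu hsv' (by decide)) hDrs
      (flip s u' (Or.inl trivial) hsu') (by decide)
  · -- only s→u
    have hu's : D u' s := flip s u' (Or.inl trivial) hsu'
    have huu' : D u u' :=
      flip u' u (Or.inr trivial) (fun h => noIn2 u s u' out_u hsu h (by decide))
    exact cyc s u u' hsu huu' hu's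
  · exact noIn2 s r u (two_le_out hsu' hsv (by decide)) hDrs
      (flip s u (Or.inl trivial) hsu) (by decide)
  · exact noIn2 s r u (two_le_out hsu' hsv (by decide)) hDrs
      (flip s u (Or.inl trivial) hsu) (by decide)
  · exact noIn2 s r u (two_le_out hsu' hsv' (by decide)) hDrs
      (flip s u (Or.inl trivial) hsu) (by decide)
  · -- only s→u'
    have hv's : D v' s := flip s v' (Or.inl trivial) hsv'
    have hu'v' : D u' v' :=
      flip v' u' (Or.inr trivial) (fun h => noIn2 u' s v' out_u' hsu' h (by decide))
    exact cyc s u' v' hsu' hu'v' hv's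
  · exact noIn2 s r u (two_le_out hsv hsv' (by decide)) hDrs
      (flip s u (Or.inl trivial) hsu) (by decide)
  · -- only s→v
    have hus : D u s := flip s u (Or.inl trivial) hsu
    have hvu : D v u :=
      flip u v (Or.inl trivial) (fun h => noIn2 v s u out_v hsv h (by decide))
    exact cyc s v u hsv hvu hus
  · -- only s→v'
    have hu's : D u' s := flip s u' (Or.inl trivial) hsu'
    have hv'u' : D v' u' :=
      flip u' v' (Or.inl trivial) (fun h => noIn2 v' s u' out_v' hsv' h (by decide))
    exact cyc s v' u' hsv' hv'u' hu's
  · -- all reverse: s would be a leaf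
    have h0 : outDeg D s = 0 := by
      simp only [outDeg]
      rw [Set.ncard_eq_zero (Set.toFinite _), Set.eq_empty_iff_forall_notMem]
      intro c hc
      have hadj := hor.1 s c hc
      cases c with
      | r => exact hnr s hc
      | s => exact hirr s hc
      | u => exact hsu hc
      | u' => exact hsu' hc
      | v => exact hsv hc
      | v' => exact hsv' hc
      | ul k => exact hadj.elim (fun h => h) (fun h => h)
      | ul' k => exact hadj.elim (fun h => h) (fun h => h)
      | vl k => exact hadj.elim (fun h => h) (fun h => h)
      | vl' k => exact hadj.elim (fun h => h) (fun h => h)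
    have hmem : s ∈ rg5Leaves \ {r} := (Set.ext_iff.mp hleaves s).mp h0
    exact hmem.1

end PaperFormalization
end
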